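/- arXiv:2602.19464 — 7 statements merged into one kernel-verified Lean document; each statement's English description precedes it below -/
import Mathlib

section
/- For all n ≥ k ≥ 2, the Stirling partition numbers satisfy S(n,k)² ≥ (k/(k-1))·S(n,k+1)·S(n,k-1). -/
/-- Stirling number of the second kind: number of partitions of an `n`-set into
`k` nonempty blocks. -/
def stirling : ℕ → ℕ → ℕ
  | 0, 0 => 1
  | 0, _ + 1 => 0
  | _ + 1, 0 => 0
  | n + 1, k + 1 => stirling n k + (k + 1) * stirling n (k + 1)

lemma stirling_zero_of_lt : ∀ n k : ℕ, n < k → stirling n k = 0 := by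
  intro n
  induction n with
  | zero => intro k hk; cases k with
    | zero => omega
    | succ k => rfl
  | succ n ih =>
    intro k hk
    cases k with
    | zero => omega
    | succ k =>
      show stirling n k + (k + 1) * stirling n (k + 1) = 0
      rw [ih k (by omega), ih (k+1) (by omega)]
      ring

lemma stirling_pos : ∀ n k : ℕ, 1 ≤ k → k ≤ n → 0 < stirling n k := by
  intro n
  induction n with
  | zero => intro k h1 h2; omega
  | succ n ih =>
    intro k h1 h2
    cases k with
    | zero => omega
    | succ k =>
      show 0 < stirling n k + (k + 1) * stirling n (k + 1)
      cases k with
      | zero =>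
        cases n with
        | zero => simp [stirling]
        | succ n =>
          have := ih 1 (by omega) (by omega)
          simp [stirling] at this ⊢
          omega
      | succ k =>
        have := ih (k + 1) (by omega) (by omega)
        omega

lemma key : ∀ n m : ℕ, (m + 2) * stirling n (m + 3) * stirling n (m + 1) ≤
    (m + 1) * stirling n (m + 2) ^ 2 := by
  intro n
  induction n with
  | zero =>
    intro m
    show (m + 2) * 0 * stirling 0 (m + 1) ≤ _
    simp
  | succ n ih =>
    intro m
    set a := stirling n (m + 1) with ha
    set b := stirling n (m + 2) with hb
    set c := stirling n (m + 3) with hc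
    set d := stirling n m with hd
    have e1 : stirling (n + 1) (m + 2) = a + (m + 2) * b := rfl
    have e2 : stirling (n + 1) (m + 3) = b + (m + 3) * c := rfl
    have e3 : stirling (n + 1) (m + 1) = d + (m + 1) * a := rfl
    rw [e1, e2, e3]
    have h1 : (m + 2) * c * a ≤ (m + 1) * b ^ 2 := ih m
    have h2 : (m + 1) * b * d ≤ m * a ^ 2 := by
      cases m with
      | zero =>
        cases n with
        | zero =>
          have : b = 0 := by rw [hb]; exact stirling_zero_of_lt 0 2 (by omega)
          simp [this]
        | succ n =>
          have : d = 0 := by rw [hd]; rfl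
          simp [this]
      | succ m => exact ih m
    by_cases hb0 : b = 0
    · have hnlt : n < m + 2 := by
        by_contra h
        have := stirling_pos n (m + 2) (by omega) (by omega)
        omega
      have hc0 : c = 0 := stirling_zero_of_lt n (m + 3) (by omega)
      rw [hb0, hc0]
      simp
    · have hbpos : 0 < b := Nat.pos_of_ne_zero hb0
      have hapos : 0 < a := by
        by_contra h
        have hnlt : n < m + 1 := by
          by_contra hcon
          have := stirling_pos n (m + 1) (by omega) (by omega)
          omega
        have : b = 0 := stirling_zero_of_lt n (m + 2) (by omega)
        exact hb0 this
      have prod := Nat.mul_le_mul h1 h2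
      have hcancel : (m + 2) * (c * a * b * d) ≤ m * (a ^ 2 * b ^ 2) := by
        have : (m + 1) * ((m + 2) * (c * a * b * d)) ≤ (m + 1) * (m * (a ^ 2 * b ^ 2)) := by
          nlinarith [prod]
        exact Nat.le_of_mul_le_mul_left this (by omega)
      have h3 : (m + 2) * (m + 3) * (c * d) ≤ (m + 1) * (m + 2) * (a * b) := by
        have hP : 0 < a * b := Nat.mul_pos hapos hbpos
        have : ((m + 2) * (m + 3) * (c * d)) * (a * b) ≤ ((m + 1) * (m + 2) * (a * b)) * (a * b) := by
          nlinarith [hcancel]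
        exact Nat.le_of_mul_le_mul_right this hP
      -- h2s : (m+2)*(b*d) ≤ (m+1)*a^2
      have h2s : (m + 2) * (b * d) ≤ (m + 1) * a ^ 2 := by
        have : (m + 1) * ((m + 2) * (b * d)) ≤ (m + 1) * ((m + 1) * a ^ 2) := by
          nlinarith [h2]
        exact Nat.le_of_mul_le_mul_left this (by omega)
      -- h1s0 : (m+3)*(c*a) ≤ (m+2)*b^2
      have h1s0 : (m + 3) * (c * a) ≤ (m + 2) * b ^ 2 := by
        have : (m + 2) * ((m + 3) * (c * a)) ≤ (m + 2) * ((m + 2) * b ^ 2) := by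
          nlinarith [h1]
        exact Nat.le_of_mul_le_mul_left this (by omega)
      have h1s : ((m + 1) * (m + 2)) * ((m + 3) * (c * a)) ≤ ((m + 1) * (m + 2)) * ((m + 2) * b ^ 2) :=
        mul_le_mul_right h1s0 _
      linarith [h2s, h3, h1s]

theorem stmt_2 (n k : ℕ) (hk : 2 ≤ k) (hnk : k ≤ n) :
    (stirling n k : ℝ) ^ 2 ≥
      ((k : ℝ) / ((k : ℝ) - 1)) * (stirling n (k + 1)) * (stirling n (k - 1)) := by
  obtain ⟨m, rfl⟩ : ∃ m, k = m + 2 := ⟨k - 2, by omega⟩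
  have h := key n m
  have hcast : ((m : ℝ) + 2) * (stirling n (m + 3)) * (stirling n (m + 1)) ≤
      ((m : ℝ) + 1) * (stirling n (m + 2)) ^ 2 := by
    exact_mod_cast h
  have hpos : (0 : ℝ) < (m : ℝ) + 1 := by positivity
  rw [ge_iff_le]
  have hsimp : (m + 2 - 1 : ℕ) = m + 1 := by omega
  rw [hsimp, show m + 2 + 1 = m + 3 from rfl]
  push_cast
  rw [show ((m : ℝ) + 2 - 1) = (m : ℝ) + 1 by ring]
  rw [div_mul_eq_mul_div, div_mul_eq_mul_div, div_le_iff₀ hpos]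
  nlinarith [hcast]
end

section
/- For m ≥ r ≥ 2, the Stirling partition number satisfies S(m-1,r) ≥ (1/r)·(2^((m-1)/(r-1)) - 2)·S(m-1,r-1). -/
/-- The multiset of all block sizes, with multiplicity, over all partitions of an
`n`-set into `k` nonempty blocks (defined recursively, mirroring the recursion
for `stirling`). -/
def blockSizes : ℕ → ℕ → Multiset ℕ
  | 0, _ => 0
  | _ + 1, 0 => 0
  | n + 1, k + 1 =>
      (blockSizes n k + Multiset.replicate (stirling n k) 1)
        + (k • blockSizes n (k + 1) + (blockSizes n (k + 1)).map (· + 1))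

lemma card_blockSizes : ∀ n k, Multiset.card (blockSizes n k) = k * stirling n k := by
  intro n
  induction n with
  | zero =>
    intro k
    cases k <;> simp [blockSizes, stirling]
  | succ n ih =>
    intro k
    cases k with
    | zero => simp [blockSizes, stirling]
    | succ k =>
      simp only [blockSizes, stirling, Multiset.card_add, Multiset.card_replicate,
        Multiset.card_nsmul, Multiset.card_map, ih]
      ring

lemma sum_blockSizes : ∀ n k, (blockSizes n k).sum = n * stirling n k := by
  intro n
  induction n with
  | zero =>
    intro k
    cases k <;> simp [blockSizes, stirling]
  | succ n ih =>
    intro k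
    cases k with
    | zero => simp [blockSizes, stirling]
    | succ k =>
      have hmap : ((blockSizes n (k + 1)).map (· + 1)).sum
          = (blockSizes n (k + 1)).sum + Multiset.card (blockSizes n (k + 1)) := by
        rw [Multiset.sum_map_add]
        simp
      simp only [blockSizes, stirling, Multiset.sum_add, Multiset.sum_replicate,
        Multiset.sum_nsmul, hmap, ih, card_blockSizes, smul_eq_mul]
      ring

lemma pow_blockSizes : ∀ n k, ((blockSizes n k).map (fun s => 2 ^ s)).sum
    = k * (k + 1) * stirling n (k + 1) + 2 * k * stirling n k := by
  intro n
  induction n with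
  | zero =>
    intro k
    cases k <;> simp [blockSizes, stirling]
  | succ n ih =>
    intro k
    cases k with
    | zero => simp [blockSizes, stirling]
    | succ k =>
      have hmap : (((blockSizes n (k + 1)).map (· + 1)).map (fun s => 2 ^ s)).sum
          = 2 * ((blockSizes n (k + 1)).map (fun s => 2 ^ s)).sum := by
        rw [Multiset.map_map, ← Multiset.sum_map_mul_left]
        apply congrArg
        apply Multiset.map_congr rfl
        intro x _
        simp [pow_succ]
        ring
      simp only [blockSizes, Multiset.map_add, Multiset.sum_add, Multiset.map_replicate,
        Multiset.sum_replicate, Multiset.map_nsmul, Multiset.sum_nsmul, hmap, ih,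
        smul_eq_mul, pow_one]
      simp only [stirling]
      ring

/-- Baby Jensen: `∑ exp aᵢ ≥ exp μ * (N + (∑ aᵢ - N * μ))`. -/
lemma exp_jensen (L : Multiset ℝ) (μ : ℝ) :
    Real.exp μ * ((Multiset.card L : ℝ) + (L.sum - (Multiset.card L : ℝ) * μ))
      ≤ (L.map Real.exp).sum := by
  induction L using Multiset.induction with
  | empty => simp
  | cons a M ih =>
    have key : Real.exp μ * ((a - μ) + 1) ≤ Real.exp a := by
      have h := Real.add_one_le_exp (a - μ)
      have := mul_le_mul_of_nonneg_left h (le_of_lt (Real.exp_pos μ))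
      rwa [← Real.exp_add, add_sub_cancel] at this
    simp only [Multiset.map_cons, Multiset.sum_cons, Multiset.card_cons]
    push_cast
    nlinarith [ih]

lemma main_ineq (n k : ℕ) (hk : 1 ≤ k) :
    (2 : ℝ) ^ ((n : ℝ) / (k : ℝ)) * (stirling n k : ℝ)
      ≤ ((k : ℝ) + 1) * stirling n (k + 1) + 2 * stirling n k := by
  have hk0 : (0 : ℝ) < (k : ℝ) := by exact_mod_cast hk
  have hμdef : Real.exp (Real.log 2 * ((n : ℝ) / (k : ℝ))) = (2 : ℝ) ^ ((n : ℝ) / (k : ℝ)) := by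
    rw [← Real.rpow_def_of_pos (by norm_num : (0:ℝ) < 2)]
  have hj := exp_jensen ((blockSizes n k).map (fun s : ℕ => Real.log 2 * (s : ℝ)))
      (Real.log 2 * ((n : ℝ) / (k : ℝ)))
  rw [Multiset.card_map, Multiset.map_map] at hj
  have hmapexp : ((blockSizes n k).map
      (Real.exp ∘ fun s : ℕ => Real.log 2 * (s : ℝ))).sum
      = (k : ℝ) * ((k : ℝ) + 1) * stirling n (k + 1) + 2 * (k : ℝ) * stirling n k := by
    have h1 : ((blockSizes n k).map (Real.exp ∘ fun s : ℕ => Real.log 2 * (s : ℝ))).sum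
        = ((blockSizes n k).map (fun s : ℕ => ((2 ^ s : ℕ) : ℝ))).sum := by
      apply congrArg
      apply Multiset.map_congr rfl
      intro x _
      simp only [Function.comp_apply]
      rw [← Real.rpow_def_of_pos (by norm_num : (0:ℝ) < 2), Real.rpow_natCast]
      push_cast
      ring
    rw [h1]
    have h2 : ((blockSizes n k).map (fun s : ℕ => ((2 ^ s : ℕ) : ℝ))).sum
        = ((((blockSizes n k).map (fun s : ℕ => 2 ^ s)).sum : ℕ) : ℝ) := by
      rw [Nat.cast_multiset_sum, Multiset.map_map]
      rfl
    rw [h2, pow_blockSizes]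
    push_cast
    ring
  have hsum : ((blockSizes n k).map (fun s : ℕ => Real.log 2 * (s : ℝ))).sum
      = Real.log 2 * ((n : ℝ) * stirling n k) := by
    rw [Multiset.sum_map_mul_left]
    congr 1
    have h3 : ((blockSizes n k).map (fun s : ℕ => (s : ℝ))).sum
        = (((blockSizes n k).sum : ℕ) : ℝ) := by
      rw [Nat.cast_multiset_sum]
    rw [h3, sum_blockSizes]
    push_cast
    ring
  rw [hmapexp, hsum, card_blockSizes, hμdef] at hj
  have hcancel : (((k * stirling n k : ℕ) : ℝ))
      * (Real.log 2 * ((n : ℝ) / (k : ℝ))) = Real.log 2 * ((n : ℝ) * stirling n k) := by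
    push_cast
    field_simp
  rw [hcancel] at hj
  push_cast at hj
  nlinarith [hj]

theorem stmt_4 (m r : ℕ) (hr : 2 ≤ r) (hmr : r ≤ m) :
    (stirling (m - 1) r : ℝ) ≥
      (1 / (r : ℝ)) * ((2 : ℝ) ^ (((m : ℝ) - 1) / ((r : ℝ) - 1)) - 2) *
        stirling (m - 1) (r - 1) := by
  obtain ⟨k, rfl⟩ : ∃ k, r = k + 1 := ⟨r - 1, (Nat.succ_pred_eq_of_pos (by omega)).symm⟩
  have hk : 1 ≤ k := by omega
  have hm : 1 ≤ m := by omega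
  have hcast1 : ((m : ℝ) - 1) = ((m - 1 : ℕ) : ℝ) := by
    rw [Nat.cast_sub hm]; norm_num
  have hcast2 : ((k + 1 : ℕ) : ℝ) - 1 = (k : ℝ) := by push_cast; ring
  have hmain := main_ineq (m - 1) k hk
  have hr0 : (0 : ℝ) < ((k + 1 : ℕ) : ℝ) := by positivity
  rw [ge_iff_le, hcast1, hcast2]
  have hsimp : (k + 1 - 1 : ℕ) = k := by omega
  rw [hsimp]
  rw [div_mul_eq_mul_div, div_mul_eq_mul_div, div_le_iff₀ hr0]
  have hS : (0 : ℝ) ≤ (stirling (m - 1) k : ℝ) := by positivity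
  push_cast at hmain ⊢
  nlinarith [hmain]
end

section
/- Let r ≥ 2, c ≥ 1 and m ≥ c·r·(1 + ln r). Then (1 - r·(e·r)^(-c))·(r^m / r!) < S(m,r) < r^m / r!. -/
/-!
Sorting the maps from an `m`-set to an `r`-set by their image gives
`r ^ m = ∑ⱼ r.descFactorial j * S(m, j)`. The term `j = r` is `r! * S(m, r)` and the term `j = 1`
is `r > 0`, whence the upper bound. For the lower bound, a union bound over the missed point
bounds the non-surjective maps by `r * (r - 1) ^ m`, and
`(r - 1) ^ m < r ^ m * exp (-m / r) ≤ r ^ m * (e * r) ^ (-c)` by `1 + x < exp x` and the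
hypothesis on `m`.
-/

open Finset Real
open scoped Nat

theorem stirling_eq_stirlingSecond : stirling = Nat.stirlingSecond := by
  funext n k
  induction n generalizing k with
  | zero => cases k <;> rfl
  | succ n ih =>
    cases k with
    | zero => rfl
    | succ k => rw [stirling, Nat.stirlingSecond_succ_succ, ih, ih, add_comm]

namespace Nat

theorem sum_descFactorial_mul_stirlingSecond (m r : ℕ) :
    ∑ j ∈ range (r + 1), r.descFactorial j * stirlingSecond m j = r ^ m := by
  induction m with
  | zero => simp [sum_range_succ']
  | succ m ih =>
    have shift : ∑ j ∈ range r, r.descFactorial (j + 1) * ((j + 1) * stirlingSecond m (j + 1)) =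
        ∑ j ∈ range (r + 1), j * (r.descFactorial j * stirlingSecond m j) := by
      rw [sum_range_succ']
      simp only [zero_mul, add_zero]
      exact sum_congr rfl fun j _ => by ring
    have extend : ∑ j ∈ range r, r.descFactorial (j + 1) * stirlingSecond m j =
        ∑ j ∈ range (r + 1), (r - j) * (r.descFactorial j * stirlingSecond m j) := by
      simp [sum_range_succ, descFactorial_succ, mul_assoc]
    calc ∑ j ∈ range (r + 1), r.descFactorial j * stirlingSecond (m + 1) j
        = ∑ j ∈ range (r + 1), (j + (r - j)) * (r.descFactorial j * stirlingSecond m j) := by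
          rw [sum_range_succ', stirlingSecond_succ_zero, mul_zero, add_zero]
          simp only [stirlingSecond_succ_succ, mul_add, sum_add_distrib, shift, extend]
          rw [← sum_add_distrib]
          exact sum_congr rfl fun j _ => by ring
      _ = r ^ (m + 1) := by
          rw [sum_congr rfl fun j hj => by rw [Nat.add_sub_cancel' (mem_range_succ_iff.1 hj)],
            ← mul_sum, ih, pow_succ, mul_comm]

theorem factorial_mul_stirlingSecond_lt_pow {m r : ℕ} (hm : m ≠ 0) (hr : 1 < r) :
    r ! * stirlingSecond m r < r ^ m := by
  obtain ⟨m, rfl⟩ := exists_eq_succ_of_ne_zero hm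
  rw [← sum_descFactorial_mul_stirlingSecond]
  have hsub : {1, r} ⊆ range (r + 1) := by
    intro j hj
    simp only [mem_insert, mem_singleton] at hj
    rw [mem_range]; omega
  calc r ! * stirlingSecond (m + 1) r
      < ∑ j ∈ {1, r}, r.descFactorial j * stirlingSecond (m + 1) j := by
        rw [sum_pair hr.ne, descFactorial_self, stirlingSecond_one_right]
        simp only [descFactorial_one, mul_one]; omega
    _ ≤ _ := sum_le_sum_of_subset hsub

theorem pow_le_factorial_mul_stirlingSecond_add (m n : ℕ) :
    (n + 1) ^ m ≤ (n + 1)! * stirlingSecond m (n + 1) + (n + 1) * n ^ m := by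
  have hdesc : ∀ j ∈ range (n + 1), (n + 1).descFactorial j ≤ (n + 1) * n.descFactorial j := by
    intro j hj
    -- `(n + 1) * n.descFactorial j = (n + 1 - j) * (n + 1).descFactorial j`
    rw [← succ_descFactorial_succ, descFactorial_succ]
    exact Nat.le_mul_of_pos_left _ (by rw [mem_range] at hj; omega)
  rw [← sum_descFactorial_mul_stirlingSecond m (n + 1), sum_range_succ, descFactorial_self,
    add_comm, ← sum_descFactorial_mul_stirlingSecond m n, mul_sum]
  refine Nat.add_le_add_left (sum_le_sum fun j hj => ?_) _
  rw [← mul_assoc]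
  exact Nat.mul_le_mul_right _ (hdesc j hj)

end Nat

theorem sub_one_pow_lt_pow_mul_exp {x : ℝ} (hx : 1 ≤ x) {m : ℕ} (hm : m ≠ 0) :
    (x - 1) ^ m < x ^ m * exp (-(m / x)) := by
  have hx0 : 0 < x := by linarith
  have hbase : x - 1 < x * exp (-(1 / x)) := by
    have hexp := add_one_lt_exp (neg_ne_zero.2 (one_div_pos.2 hx0).ne')
    calc x - 1 = x * (-(1 / x) + 1) := by field_simp; ring
      _ < x * exp (-(1 / x)) := by gcongr
  calc (x - 1) ^ m < (x * exp (-(1 / x))) ^ m := pow_lt_pow_left₀ hbase (by linarith) hm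
    _ = x ^ m * exp (-(m / x)) := by rw [mul_pow, ← exp_nat_mul]; ring_nf

theorem exp_neg_div_le_rpow_neg {x c m : ℝ} (hx : 0 < x) (hm : c * x * (1 + log x) ≤ m) :
    exp (-(m / x)) ≤ (exp 1 * x) ^ (-c) := by
  rw [rpow_def_of_pos (by positivity), log_mul (exp_ne_zero 1) hx.ne', log_exp, exp_le_exp]
  have : c * (1 + log x) ≤ m / x := by rw [le_div_iff₀ hx]; linarith
  linarith

theorem stmt_5 (r m : ℕ) (c : ℝ) (hr : 2 ≤ r) (hc : 1 ≤ c)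
    (hm : (m : ℝ) ≥ c * r * (1 + Real.log r)) :
    (1 - (r : ℝ) * (Real.exp 1 * r) ^ (-c)) * ((r : ℝ) ^ m / (Nat.factorial r)) <
        (stirling m r : ℝ) ∧
      (stirling m r : ℝ) < (r : ℝ) ^ m / (Nat.factorial r) := by
  obtain ⟨n, rfl⟩ : ∃ n, r = n + 1 := ⟨r - 1, by omega⟩
  push_cast at hm ⊢
  have hx : (1 : ℝ) ≤ n + 1 := le_add_of_nonneg_left n.cast_nonneg
  have hm0 : m ≠ 0 := by
    have : 0 < c * (n + 1) * (1 + log (n + 1)) := by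
      have hlog := log_nonneg hx
      positivity
    exact_mod_cast (this.trans_le hm).ne'
  have hfac : (0 : ℝ) < (n + 1)! := by positivity
  have hlower : ((n : ℝ) + 1) ^ m ≤
      (n + 1)! * Nat.stirlingSecond m (n + 1) + (n + 1) * (n : ℝ) ^ m := by
    exact_mod_cast Nat.pow_le_factorial_mul_stirlingSecond_add m n
  have hmissed := (sub_one_pow_lt_pow_mul_exp hx hm0).trans_le
    (mul_le_mul_of_nonneg_left (exp_neg_div_le_rpow_neg (by positivity) hm) (by positivity))
  rw [add_sub_cancel_right] at hmissed
  rw [stirling_eq_stirlingSecond]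
  constructor
  · rw [mul_div_assoc', div_lt_iff₀ hfac]
    linarith [mul_lt_mul_of_pos_left hmissed (by positivity : (0 : ℝ) < n + 1)]
  · rw [lt_div_iff₀' hfac]
    exact_mod_cast Nat.factorial_mul_stirlingSecond_lt_pow hm0 (by omega : 1 < n + 1)
end

section
/- For r ≥ 2 and m ≥ r·(1 + ln r), the Stirling partition number satisfies S(m,r) > (1/4)·r^(m-r+2). -/
/-!
Inclusion–exclusion gives `r! S(m,r) = ∑ᵢ (-1)ⁱ C(r,i) (r-i)^m`. For `m ≥ r (1 + log r)` the terms
`C(r,i) (r-i)^m` decrease in `i`, because `s (1 - 1/s)^m ≤ 1/e` for every `2 ≤ s ≤ r`. Hence the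
alternating sum is at least its first two terms: `r! S(m,r) ≥ r^m - r (r-1)^m ≥ (1 - 1/e) r^m > r^m / 2`,
and `r! ≤ 2 r^(r-2)` turns this into the bound.
-/

open Finset Real Filter Topology

def surjCount (m r : ℕ) : ℤ :=
  ∑ i ∈ range (r + 1), (-1) ^ i * (r.choose i * (r - i) ^ m : ℕ)

lemma sum_range_neg_one_pow_mul_choose_succ (r : ℕ) (g : ℕ → ℤ) :
    ∑ i ∈ range (r + 2), (-1) ^ i * ((r + 1).choose i * g i) =
      ∑ i ∈ range (r + 1), (-1) ^ i * (r.choose i * (g i - g (i + 1))) := by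
  have hshift : ∑ i ∈ range (r + 2), (-1) ^ i * (r.choose i * g i) =
      ∑ i ∈ range (r + 1), (-1) ^ i * (r.choose i * g i) := by
    simp [sum_range_succ _ (r + 1)]
  simp only [mul_sub, sum_sub_distrib]
  rw [sum_range_succ', ← hshift, sum_range_succ' _ (r + 1)]
  simp only [Nat.choose_succ_succ', Nat.cast_add, pow_succ, mul_neg_one, neg_mul, add_mul, mul_add,
    sum_add_distrib, sum_neg_distrib, Nat.choose_zero_right]
  ring

lemma surjCount_succ_succ (m r : ℕ) :
    surjCount (m + 1) (r + 1) = (r + 1) * (surjCount m r + surjCount m (r + 1)) := by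
  set B : ℤ := ∑ i ∈ range (r + 1), (-1) ^ i * (r.choose i * (r + 1 - i) ^ m : ℕ)
  have hsucc : surjCount (m + 1) (r + 1) = (r + 1) * B := by
    rw [surjCount, sum_range_succ, mul_sum]
    simp only [Nat.sub_self, zero_pow (Nat.succ_ne_zero m), mul_zero, Nat.cast_zero, add_zero]
    refine sum_congr rfl fun i _ => ?_
    have hterm : (r + 1).choose i * (r + 1 - i) ^ (m + 1) =
        (r + 1) * (r.choose i * (r + 1 - i) ^ m) := by
      rw [pow_succ, mul_comm _ (r + 1 - i), ← mul_assoc, ← Nat.choose_mul_succ_eq]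
      ring
    rw [hterm]
    push_cast
    ring
  have hpascal : surjCount m (r + 1) = B - surjCount m r := by
    have := sum_range_neg_one_pow_mul_choose_succ r (fun i => ((r + 1 - i : ℕ) : ℤ) ^ m)
    simp only [Nat.add_sub_add_right] at this
    simp only [surjCount, B, Nat.cast_mul, Nat.cast_pow, this, mul_sub, sum_sub_distrib]
  rw [hsucc, hpascal]
  ring

lemma factorial_mul_stirling (m r : ℕ) : (r.factorial * stirling m r : ℤ) = surjCount m r := by
  induction m generalizing r with
  | zero =>
    have := Int.alternating_sum_range_choose (n := r)
    cases r <;> simp_all [surjCount, stirling]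
  | succ m ih =>
    cases r with
    | zero => simp [surjCount, stirling]
    | succ r =>
      rw [surjCount_succ_succ, ← ih, ← ih, stirling, Nat.factorial_succ]
      push_cast
      ring

lemma pow_sub_mul_pow_le_surjCount (m r : ℕ)
    (hanti : Antitone fun i => r.choose i * (r - i) ^ m) :
    ((r ^ m : ℕ) : ℤ) - (r * (r - 1) ^ m : ℕ) ≤ surjCount m r := by
  have hlim : Tendsto (fun n => ∑ i ∈ range n, (-1) ^ i * ((r.choose i * (r - i) ^ m : ℕ) : ℤ))
      atTop (𝓝 (surjCount m r)) := by
    refine tendsto_atTop_of_eventually_const fun n (hn : r + 1 ≤ n) => ?_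
    refine (sum_subset (range_subset_range.2 hn) fun i _ hir => ?_).symm
    simp [Nat.choose_eq_zero_of_lt (by simpa using hir : r < i)]
  simpa [sum_range_succ] using
    (Nat.mono_cast.comp_antitone hanti).alternating_series_le_tendsto hlim 1

lemma mul_sub_one_pow_le_pow_div_exp_one {x : ℝ} (hx : 1 ≤ x) {m : ℕ}
    (hm : x * (1 + log x) ≤ m) : x * (x - 1) ^ m ≤ x ^ m / exp 1 := by
  have hx0 : 0 < x := by linarith
  have hstep : x - 1 ≤ x * exp (-x⁻¹) := by
    have := add_one_le_exp (-x⁻¹)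
    calc x - 1 = x * (-x⁻¹ + 1) := by field_simp; ring
      _ ≤ x * exp (-x⁻¹) := by gcongr
  have hexp : log x - m / x ≤ -1 := by
    have : 1 + log x ≤ m / x := by rw [le_div_iff₀ hx0]; linarith
    linarith
  calc x * (x - 1) ^ m ≤ x * (x * exp (-x⁻¹)) ^ m := by gcongr
    _ = x ^ m * exp (log x - m / x) := by
      rw [mul_pow, ← exp_nat_mul, exp_sub, exp_log hx0, mul_neg, ← div_eq_mul_inv, exp_neg]
      ring
    _ ≤ x ^ m * exp (-1) := by gcongr
    _ = x ^ m / exp 1 := by rw [exp_neg, div_eq_mul_inv]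

lemma antitone_choose_mul_pow {r m : ℕ} (hm : r * (1 + log r) ≤ m) :
    Antitone fun i => r.choose i * (r - i) ^ m := by
  refine antitone_nat_of_succ_le fun i => ?_
  rcases lt_or_ge (i + 1) r with hi | hi
  · set s := r - i
    have hs : 1 ≤ s := by omega
    have hs1 : (1 : ℝ) ≤ s := by exact_mod_cast hs
    have hsr : (s : ℝ) ≤ r := by exact_mod_cast Nat.sub_le r i
    have hsm : (s : ℝ) * (1 + log s) ≤ m := by
      refine le_trans ?_ hm
      gcongr
    have hpow : s * (s - 1) ^ m ≤ s ^ m := by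
      have h := (mul_sub_one_pow_le_pow_div_exp_one hs1 hsm).trans
        (div_le_self (by positivity) (one_le_exp zero_le_one))
      rw [← Nat.cast_one, ← Nat.cast_sub hs] at h
      exact_mod_cast h
    have hchoose := Nat.choose_succ_right_eq r i
    have hsub : r - (i + 1) = s - 1 := by omega
    refine Nat.le_of_mul_le_mul_right (c := i + 1) ?_ (by omega)
    calc r.choose (i + 1) * (r - (i + 1)) ^ m * (i + 1)
        = r.choose i * (s * (s - 1) ^ m) := by rw [hsub, mul_right_comm, hchoose, mul_assoc]
      _ ≤ r.choose i * s ^ m := by gcongr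
      _ ≤ r.choose i * (r - i) ^ m * (i + 1) := Nat.le_mul_of_pos_right _ (by omega)
  · rcases hi.lt_or_eq with hlt | rfl
    · simp [Nat.choose_eq_zero_of_lt hlt]
    · simpa using (pow_le_one₀ le_rfl zero_le_one).trans (Nat.le_add_left 1 i)

lemma Nat.factorial_le_two_mul_pow {r : ℕ} (hr : 2 ≤ r) : r.factorial ≤ 2 * r ^ (r - 2) := by
  have h := Nat.factorial_mul_descFactorial (Nat.sub_le r 2)
  rw [Nat.sub_sub_self hr] at h
  rw [← h]
  exact Nat.mul_le_mul_left _ (Nat.descFactorial_le_pow r _)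

lemma pow_sub_pow_div_exp_one_le_factorial_mul_stirling {r m : ℕ} (hr : 1 ≤ r)
    (hm : r * (1 + log r) ≤ m) :
    (r : ℝ) ^ m - r ^ m / exp 1 ≤ r.factorial * stirling m r := by
  have hbonf := pow_sub_mul_pow_le_surjCount m r (antitone_choose_mul_pow hm)
  rw [← factorial_mul_stirling] at hbonf
  have hbonfℝ : (r : ℝ) ^ m - r * (r - 1) ^ m ≤ r.factorial * stirling m r := by
    rw [← Nat.cast_one, ← Nat.cast_sub hr]
    exact_mod_cast hbonf
  linarith [mul_sub_one_pow_le_pow_div_exp_one (by exact_mod_cast hr) hm]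

theorem stmt_6 (r m : ℕ) (hr : 2 ≤ r) (hm : (m : ℝ) ≥ r * (1 + Real.log r)) :
    (stirling m r : ℝ) > (1 / 4) * (r : ℝ) ^ (m - r + 2) := by
  have hr2 : (2 : ℝ) ≤ r := by exact_mod_cast hr
  have hrm : r ≤ m := by
    have : (r : ℝ) ≤ m := by nlinarith [log_nonneg (by linarith : (1 : ℝ) ≤ r)]
    exact_mod_cast this
  have hlower := pow_sub_pow_div_exp_one_le_factorial_mul_stirling (by omega) hm
  have hfac : (r.factorial : ℝ) ≤ 2 * r ^ (r - 2) := by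
    exact_mod_cast Nat.factorial_le_two_mul_pow hr
  have hsplit : (r : ℝ) ^ m = r ^ (m - r + 2) * r ^ (r - 2) := by rw [← pow_add]; congr 1; omega
  have he : 2 < exp 1 := by linarith [add_one_lt_exp one_ne_zero]
  have hpos : (0 : ℝ) < r ^ m := by positivity
  have hhalf : (r : ℝ) ^ m / 2 < r ^ m - r ^ m / exp 1 := by
    linarith [div_lt_div_of_pos_left hpos two_pos he]
  refine lt_of_mul_lt_mul_left ?_ (Nat.cast_nonneg r.factorial)
  calc (r.factorial : ℝ) * (1 / 4 * r ^ (m - r + 2))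
        ≤ 2 * r ^ (r - 2) * (1 / 4 * r ^ (m - r + 2)) := by gcongr
    _ = r ^ m / 2 := by rw [hsplit]; ring
    _ < _ := hhalf.trans_le hlower
end

section
/- Let j ≥ k ≥ t+2 and 0 ≤ s ≤ k-t-2, and let L(j,t) = (t+1) + (j-t+1)·log₂((t+1)(j-t+1)). If n ≥ 2·L(j,t) - t - 2, then S(n-t-s, k-t-s) > (t+1)²·(j-t+1)²·S(n-t-s-1, k-t-s-1). -/
/-- `L(k,t) = (t+1) + (k-t+1)·log₂((t+1)(k-t+1))`. -/
noncomputable def Lfun (k t : ℕ) : ℝ :=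
  ((t : ℝ) + 1) + ((k : ℝ) - t + 1) * Real.logb 2 (((t : ℝ) + 1) * ((k : ℝ) - t + 1))

/-!
Put `m + 1 = n - t - s`, `r + 1 = k - t - s` and `C = (t + 1)(j - t + 1)`. Expanding
`x ^ m = ∑ᵢ S(m, i) · x(x-1)⋯(x-i+1)` gives `r! S(m, r) ≤ r ^ m` (surjections are functions) and
`(r+1)^(m+1) ≤ (r+1)! S(m+1, r+1) + (r+1) r^(m+1)` (a non-surjection misses one of `r + 1` values),
so `S(m+1, r+1) > C² S(m, r)` as soon as `(C² + r) r^m < (r+1)^m`. As `(1 + 1/r)^r ≥ 2`, that follows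
from `r log₂(C² + r) < m`, and `log₂(C² + r) ≤ 2 log₂ C + r / (C² ln 2)` makes this a consequence of
the bound on `n`.
-/

open Finset Real
open scoped Nat

theorem Nat.mul_descFactorial (x i : ℕ) :
    x * x.descFactorial i = x.descFactorial (i + 1) + i * x.descFactorial i := by
  rcases le_or_gt i x with hi | hi
  · rw [Nat.descFactorial_succ, ← Nat.add_mul, Nat.sub_add_cancel hi]
  · rw [Nat.descFactorial_eq_zero_iff_lt.mpr hi, Nat.descFactorial_eq_zero_iff_lt.mpr (by omega)]
    simp

theorem pow_eq_sum_stirling_mul_descFactorial (x m : ℕ) :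
    x ^ m = ∑ i ∈ range (x + 1), stirling m i * x.descFactorial i := by
  induction m with
  | zero =>
    rw [sum_range_succ']
    simp [stirling]
  | succ m ih =>
    calc x ^ (m + 1)
        = ∑ i ∈ range (x + 1), (stirling m i * x.descFactorial (i + 1) +
            i * stirling m i * x.descFactorial i) := by
          rw [pow_succ, ih, sum_mul]
          refine sum_congr rfl fun i _ => ?_
          rw [Nat.mul_assoc, Nat.mul_comm _ x, Nat.mul_descFactorial]
          ring
      _ = ∑ i ∈ range x, (stirling m i * x.descFactorial (i + 1) +
            (i + 1) * stirling m (i + 1) * x.descFactorial (i + 1)) := by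
          rw [sum_add_distrib, sum_range_succ, sum_range_succ' (fun i => i * _ * _),
            Nat.descFactorial_eq_zero_iff_lt.mpr (by omega : x < x + 1), sum_add_distrib]
          simp
      _ = ∑ i ∈ range (x + 1), stirling (m + 1) i * x.descFactorial i := by
          rw [sum_range_succ']
          simp only [stirling, Nat.add_mul, Nat.zero_mul, Nat.add_zero]

theorem factorial_mul_stirling_le_pow (m r : ℕ) : r ! * stirling m r ≤ r ^ m := by
  rw [pow_eq_sum_stirling_mul_descFactorial, ← Nat.descFactorial_self, Nat.mul_comm]
  exact single_le_sum (f := fun i => stirling m i * r.descFactorial i) (fun _ _ => Nat.zero_le _)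
    (self_mem_range_succ r)

theorem Nat.succ_descFactorial_le (r : ℕ) {i : ℕ} (hi : i ≤ r) :
    (r + 1).descFactorial i ≤ (r + 1) * r.descFactorial i := by
  rw [← Nat.succ_descFactorial]
  exact Nat.le_mul_of_pos_left _ (by omega)

theorem succ_pow_le_factorial_mul_stirling_add (m r : ℕ) :
    (r + 1) ^ m ≤ (r + 1)! * stirling m (r + 1) + (r + 1) * r ^ m := by
  rw [pow_eq_sum_stirling_mul_descFactorial, sum_range_succ, Nat.descFactorial_self, Nat.add_comm,
    Nat.mul_comm, pow_eq_sum_stirling_mul_descFactorial, mul_sum]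
  refine Nat.add_le_add_left (sum_le_sum fun i hi => ?_) _
  rw [Nat.mul_left_comm]
  exact Nat.mul_le_mul_left _ (Nat.succ_descFactorial_le r (Nat.lt_succ_iff.mp (mem_range.mp hi)))

theorem mul_stirling_lt_stirling_succ {M m r : ℕ} (h : (M + r) * r ^ m < (r + 1) ^ m) :
    M * stirling m r < stirling (m + 1) (r + 1) := by
  have hupper := factorial_mul_stirling_le_pow m r
  have hlower := succ_pow_le_factorial_mul_stirling_add (m + 1) r
  refine Nat.lt_of_mul_lt_mul_left (a := (r + 1)!) ?_
  calc (r + 1)! * (M * stirling m r) = (r + 1) * M * (r ! * stirling m r) := by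
        rw [Nat.factorial_succ]; ring
    _ ≤ (r + 1) * M * r ^ m := Nat.mul_le_mul_left _ hupper
    _ < (r + 1)! * stirling (m + 1) (r + 1) := by
        have : (r + 1) * ((M + r) * r ^ m) < (r + 1) * (r + 1) ^ m :=
          Nat.mul_lt_mul_of_pos_left h (Nat.succ_pos r)
        rw [pow_succ', pow_succ'] at hlower
        linarith

theorem two_mul_pow_self_le_succ_pow_self {r : ℕ} (hr : r ≠ 0) :
    2 * (r : ℝ) ^ r ≤ ((r : ℝ) + 1) ^ r := by
  have hr' : (0 : ℝ) < r := by positivity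
  have hbern := one_add_mul_le_pow (a := 1 / (r : ℝ)) (by linarith [one_div_pos.mpr hr']) r
  rw [mul_one_div_cancel hr'.ne', one_add_one_eq_two] at hbern
  calc 2 * (r : ℝ) ^ r ≤ (1 + 1 / r) ^ r * r ^ r := by gcongr
    _ = ((r : ℝ) + 1) ^ r := by rw [← mul_pow]; field_simp

theorem mul_pow_lt_succ_pow_of_mul_logb_lt {X : ℝ} {r m : ℕ} (hr : r ≠ 0) (hX : 0 < X)
    (h : r * logb 2 X < m) : X * (r : ℝ) ^ m < ((r : ℝ) + 1) ^ m := by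
  have hXr : X ^ r < 2 ^ m := by
    rw [← logb_pow, logb_lt_iff_lt_rpow one_lt_two (by positivity), rpow_natCast] at h
    exact h
  refine lt_of_pow_lt_pow_left₀ r (by positivity) ?_
  calc (X * (r : ℝ) ^ m) ^ r = X ^ r * ((r : ℝ) ^ r) ^ m := by ring
    _ < 2 ^ m * ((r : ℝ) ^ r) ^ m := by gcongr
    _ = (2 * (r : ℝ) ^ r) ^ m := by ring
    _ ≤ (((r : ℝ) + 1) ^ r) ^ m := by gcongr; exact two_mul_pow_self_le_succ_pow_self hr
    _ = (((r : ℝ) + 1) ^ m) ^ r := by ring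

theorem mul_logb_sq_add_lt {C r : ℝ} (hC : 0 < C) (hr : 0 ≤ r) (hrC : r ≤ C) :
    r * logb 2 (C ^ 2 + r) < 2 * r * logb 2 C + 2 := by
  have hlog : log (C ^ 2 + r) ≤ 2 * log C + r / C ^ 2 := by
    have hsplit : C ^ 2 + r = C ^ 2 * (1 + r / C ^ 2) := by field_simp
    rw [hsplit, log_mul (by positivity) (by positivity), log_pow]
    have := log_le_sub_one_of_pos (x := 1 + r / C ^ 2) (by positivity)
    push_cast
    linarith
  have hsq : r * (r / C ^ 2) ≤ 1 := by
    rw [← mul_div_assoc, div_le_one (by positivity)]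
    nlinarith
  have hl2 := log_two_gt_d9
  have key : r * log (C ^ 2 + r) < 2 * r * log C + 2 * log 2 := by nlinarith
  have hl2pos := log_pos one_lt_two
  simp only [logb]
  field_simp
  linarith

theorem mul_logb_sq_add_lt_of_le {C J r s m : ℝ} (hC : 2 ≤ C) (hr : 0 ≤ r) (hs : 0 ≤ s)
    (hrsJ : r + s + 2 ≤ J) (hJC : J ≤ C) (hm : 2 * J * logb 2 C ≤ m + s + 1) :
    r * logb 2 (C ^ 2 + r) < m := by
  have hL : 1 ≤ logb 2 C := by
    rwa [le_logb_iff_rpow_le one_lt_two (by linarith), rpow_one]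
  have hlog := mul_logb_sq_add_lt (C := C) (by linarith) hr (by linarith)
  have hJL : (r + s + 2) * logb 2 C ≤ J * logb 2 C := mul_le_mul_of_nonneg_right hrsJ (by linarith)
  nlinarith

theorem stmt_10 (n j k t s : ℕ) (hjk : k ≤ j) (hkt : t + 2 ≤ k)
    (hs : s ≤ k - t - 2) (hn : (n : ℝ) ≥ 2 * Lfun j t - t - 2) :
    stirling (n - t - s) (k - t - s) >
      (t + 1) ^ 2 * (j - t + 1) ^ 2 * stirling (n - t - s - 1) (k - t - s - 1) := by
  obtain ⟨r, hr⟩ : ∃ r, k - t - s = r + 1 := ⟨k - t - s - 1, by omega⟩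
  obtain ⟨J, hJ⟩ : ∃ J, j - t + 1 = J := ⟨_, rfl⟩
  obtain ⟨C, hC⟩ : ∃ C, (t + 1) * J = C := ⟨_, rfl⟩
  have hJC : J ≤ C := hC ▸ Nat.le_mul_of_pos_left J t.succ_pos
  have hJR : (J : ℝ) = j - t + 1 := by rw [← hJ]; push_cast [show t ≤ j by omega]; ring
  have hCR : (C : ℝ) = (t + 1) * J := by rw [← hC]; push_cast; ring
  have hC2 : (2 : ℝ) ≤ C := by exact_mod_cast (by omega : 2 ≤ C)
  have key : (r : ℝ) * logb 2 ((C : ℝ) ^ 2 + r) < n - t - s - 1 := by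
    refine mul_logb_sq_add_lt_of_le (J := J) hC2 r.cast_nonneg s.cast_nonneg
      (by exact_mod_cast (by omega : r + s + 2 ≤ J)) (by exact_mod_cast hJC) ?_
    rw [Lfun, ← hJR, ← hCR] at hn
    linarith
  have hkey_nonneg : 0 ≤ (r : ℝ) * logb 2 ((C : ℝ) ^ 2 + r) :=
    mul_nonneg r.cast_nonneg (logb_nonneg one_lt_two (by nlinarith))
  obtain ⟨m, hm⟩ : ∃ m, n - t - s = m + 1 := ⟨n - t - s - 1, by
    have : t + s + 1 < n := by exact_mod_cast (by push_cast; linarith : ((t + s + 1 : ℕ) : ℝ) < n)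
    omega⟩
  have hmR : (m : ℝ) = n - t - s - 1 := by
    have : (n : ℝ) = m + 1 + t + s := by exact_mod_cast (by omega : n = m + 1 + t + s)
    linarith
  rw [hr, hm, Nat.add_sub_cancel, Nat.add_sub_cancel, hJ, ← mul_pow, hC, gt_iff_lt]
  apply mul_stirling_lt_stirling_succ
  exact_mod_cast mul_pow_lt_succ_pow_of_mul_logb_lt (by omega : r ≠ 0) (by positivity) (hmR ▸ key)
end

section
/- Let n > k > ℓ ≥ t+2. Then r₂(n,k,ℓ,t) > r₂(n,ℓ,k,t), where r₂(n,k,ℓ,t) = S(n-t-1,k-t-1)·((t+1)·S(n-t,ℓ-t) - t·S(n-t-1,ℓ-t-1)). -/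
/-- Surjection numbers. -/
def surj : ℕ → ℕ → ℕ
  | 0, 0 => 1
  | 0, _ + 1 => 0
  | _ + 1, 0 => 0
  | n + 1, k + 1 => (k + 1) * (surj n k + surj n (k + 1))

lemma surj_eq_factorial_stirling : ∀ m c, surj m c = c.factorial * stirling m c := by
  intro m
  induction m with
  | zero => intro c; cases c <;> simp [surj, stirling]
  | succ m ih =>
    intro c
    cases c with
    | zero => simp [surj, stirling]
    | succ c =>
      show (c + 1) * (surj m c + surj m (c + 1)) = _
      rw [ih c, ih (c + 1)]
      show _ = (c + 1).factorial * (stirling m c + (c + 1) * stirling m (c + 1))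
      rw [Nat.factorial_succ]
      ring

lemma surj_zero : ∀ m j, m < j → surj m j = 0 := by
  intro m
  induction m with
  | zero => intro j hj; cases j with
    | zero => omega
    | succ j => rfl
  | succ m ih =>
    intro j hj
    cases j with
    | zero => omega
    | succ j =>
      show (j + 1) * (surj m j + surj m (j + 1)) = 0
      rw [ih j (by omega), ih (j + 1) (by omega)]
      simp

lemma surj_pos : ∀ m j, 1 ≤ j → j ≤ m → 0 < surj m j := by
  intro m
  induction m with
  | zero => intro j h1 h2; omega
  | succ m ih =>
    intro j h1 h2
    cases j with
    | zero => omega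
    | succ j =>
      show 0 < (j + 1) * (surj m j + surj m (j + 1))
      cases j with
      | zero =>
        cases m with
        | zero => simp [surj]
        | succ m => have := ih 1 (by omega) (by omega); positivity
      | succ j =>
        have := ih (j + 1) (by omega) (by omega)
        positivity

/-- cross lemma from log-concavity at one level -/
lemma surj_cross (m i : ℕ)
    (hLC : ∀ j, surj m j * surj m (j + 2) ≤ surj m (j + 1) * surj m (j + 1)) :
    surj m i * surj m (i + 3) ≤ surj m (i + 1) * surj m (i + 2) := by
  by_cases h3 : surj m (i + 3) = 0
  · simp [h3]
  by_cases h0 : surj m i = 0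
  · simp [h0]
  -- both nonzero : i ≥ 1 would follow except i = 0 case
  have hm3 : i + 3 ≤ m := by
    by_contra h; exact h3 (surj_zero m (i + 3) (by omega))
  have h1 : 0 < surj m (i + 1) := surj_pos m (i + 1) (by omega) (by omega)
  have h2 : 0 < surj m (i + 2) := surj_pos m (i + 2) (by omega) (by omega)
  have key : (surj m i * surj m (i + 3)) * (surj m (i + 1) * surj m (i + 2)) ≤
      (surj m (i + 1) * surj m (i + 2)) * (surj m (i + 1) * surj m (i + 2)) := by
    calc (surj m i * surj m (i + 3)) * (surj m (i + 1) * surj m (i + 2))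
        = (surj m i * surj m (i + 2)) * (surj m (i + 1) * surj m (i + 3)) := by ring
      _ ≤ (surj m (i + 1) * surj m (i + 1)) * (surj m (i + 2) * surj m (i + 2)) :=
          Nat.mul_le_mul (hLC i) (hLC (i + 1))
      _ = (surj m (i + 1) * surj m (i + 2)) * (surj m (i + 1) * surj m (i + 2)) := by ring
  exact Nat.le_of_mul_le_mul_right key (by positivity)

/-- expansion lemma -/
lemma surj_expand (m i : ℕ)
    (hLC : ∀ j, surj m j * surj m (j + 2) ≤ surj m (j + 1) * surj m (j + 1)) :
    (surj m i + surj m (i + 1)) * (surj m (i + 2) + surj m (i + 3)) ≤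
      (surj m (i + 1) + surj m (i + 2)) * (surj m (i + 1) + surj m (i + 2)) := by
  have h1 := hLC i
  have h2 := hLC (i + 1)
  have h3 := surj_cross m i hLC
  nlinarith [h1, h2, h3]

lemma surj_lc : ∀ m j, surj m j * surj m (j + 2) ≤ surj m (j + 1) * surj m (j + 1) := by
  intro m
  induction m with
  | zero =>
    intro j
    cases j with
    | zero => simp [surj]
    | succ j => simp [surj]
  | succ m ih =>
    intro j
    cases j with
    | zero =>
      show surj (m + 1) 0 * _ ≤ _
      simp [surj]
    | succ i =>
      show ((i + 1) * (surj m i + surj m (i + 1))) * ((i + 3) * (surj m (i + 2) + surj m (i + 3)))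
          ≤ ((i + 2) * (surj m (i + 1) + surj m (i + 2))) * ((i + 2) * (surj m (i + 1) + surj m (i + 2)))
      have hE := surj_expand m i ih
      have h13 : (i + 1) * (i + 3) ≤ (i + 2) * (i + 2) := by nlinarith
      calc ((i + 1) * (surj m i + surj m (i + 1))) * ((i + 3) * (surj m (i + 2) + surj m (i + 3)))
          = ((i + 1) * (i + 3)) *
              ((surj m i + surj m (i + 1)) * (surj m (i + 2) + surj m (i + 3))) := by ring
        _ ≤ ((i + 2) * (i + 2)) *
              ((surj m (i + 1) + surj m (i + 2)) * (surj m (i + 1) + surj m (i + 2))) :=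
            Nat.mul_le_mul h13 hE
        _ = ((i + 2) * (surj m (i + 1) + surj m (i + 2))) *
              ((i + 2) * (surj m (i + 1) + surj m (i + 2))) := by ring

/-- strict log-concavity -/
lemma surj_slc (m j : ℕ) (h : j + 2 ≤ m) :
    surj m j * surj m (j + 2) < surj m (j + 1) * surj m (j + 1) := by
  obtain ⟨m', rfl⟩ : ∃ m', m = m' + 1 := ⟨m - 1, by omega⟩
  cases j with
  | zero =>
    have : 0 < surj (m' + 1) 1 := surj_pos _ 1 (by omega) (by omega)
    show surj (m' + 1) 0 * _ < _
    have h0 : surj (m' + 1) 0 = 0 := rfl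
    rw [h0, Nat.zero_mul]
    exact Nat.mul_pos this this
  | succ i =>
    show ((i + 1) * (surj m' i + surj m' (i + 1))) * ((i + 3) * (surj m' (i + 2) + surj m' (i + 3)))
        < ((i + 2) * (surj m' (i + 1) + surj m' (i + 2))) * ((i + 2) * (surj m' (i + 1) + surj m' (i + 2)))
    have hE := surj_expand m' i (surj_lc m')
    have hp : 0 < surj m' (i + 1) := surj_pos _ _ (by omega) (by omega)
    have hBB : 0 < (surj m' (i + 1) + surj m' (i + 2)) * (surj m' (i + 1) + surj m' (i + 2)) := by
      positivity
    have h13 : (i + 1) * (i + 3) < (i + 2) * (i + 2) := by nlinarith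
    calc ((i + 1) * (surj m' i + surj m' (i + 1))) * ((i + 3) * (surj m' (i + 2) + surj m' (i + 3)))
        = ((i + 1) * (i + 3)) *
            ((surj m' i + surj m' (i + 1)) * (surj m' (i + 2) + surj m' (i + 3))) := by ring
      _ ≤ ((i + 1) * (i + 3)) *
            ((surj m' (i + 1) + surj m' (i + 2)) * (surj m' (i + 1) + surj m' (i + 2))) :=
          Nat.mul_le_mul_left _ hE
      _ < ((i + 2) * (i + 2)) *
            ((surj m' (i + 1) + surj m' (i + 2)) * (surj m' (i + 1) + surj m' (i + 2))) :=
          Nat.mul_lt_mul_of_lt_of_le h13 le_rfl hBB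
      _ = ((i + 2) * (surj m' (i + 1) + surj m' (i + 2))) *
            ((i + 2) * (surj m' (i + 1) + surj m' (i + 2))) := by ring

/-- the chained inequality -/
lemma surj_chain : ∀ d b m, 1 ≤ b → b + 2 + d ≤ m →
    surj m (b + 2 + d) * surj m b < surj m (b + 1 + d) * surj m (b + 1) := by
  intro d
  induction d with
  | zero =>
    intro b m hb hm
    have := surj_slc m b (by omega)
    calc surj m (b + 2 + 0) * surj m b = surj m b * surj m (b + 2) := by ring_nf
      _ < surj m (b + 1) * surj m (b + 1) := this
      _ = surj m (b + 1 + 0) * surj m (b + 1) := by ring_nf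
  | succ d ih =>
    intro b m hb hm
    have h1 := ih b m hb (by omega)
    have h2 := surj_slc m (b + 1 + d) (by omega)
    have hA : 0 < surj m (b + 1 + d) := surj_pos _ _ (by omega) (by omega)
    have hB : 0 < surj m (b + 2 + d) := surj_pos _ _ (by omega) (by omega)
    -- want : surj m (b+3+d) * surj m b < surj m (b+2+d) * surj m (b+1)
    have key : surj m (b + 1 + d) * (surj m (b + 2 + d + 1) * surj m b) <
        surj m (b + 1 + d) * (surj m (b + 1 + d + 1) * surj m (b + 1)) := by
      calc surj m (b + 1 + d) * (surj m (b + 2 + d + 1) * surj m b)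
          = (surj m (b + 1 + d) * surj m (b + 1 + d + 2)) * surj m b := by ring_nf
        _ ≤ (surj m (b + 1 + d + 1) * surj m (b + 1 + d + 1)) * surj m b :=
            Nat.mul_le_mul (le_of_lt h2) le_rfl
        _ = surj m (b + 2 + d) * (surj m (b + 2 + d) * surj m b) := by ring_nf
        _ < surj m (b + 2 + d) * (surj m (b + 1 + d) * surj m (b + 1)) :=
            (Nat.mul_lt_mul_left hB).2 h1
        _ = surj m (b + 1 + d) * (surj m (b + 1 + d + 1) * surj m (b + 1)) := by ring_nf
    exact Nat.lt_of_mul_lt_mul_left key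

/-- The key Stirling inequality. -/
lemma stirling_key (m a b : ℕ) (hb : 1 ≤ b) (hab : b + 1 ≤ a) (ham : a + 1 ≤ m) :
    (a + 1) * stirling m b * stirling m (a + 1) < (b + 1) * stirling m a * stirling m (b + 1) := by
  obtain ⟨d, rfl⟩ : ∃ d, a = b + 1 + d := ⟨a - b - 1, by omega⟩
  have h := surj_chain d b m hb (by omega)
  rw [surj_eq_factorial_stirling, surj_eq_factorial_stirling,
      surj_eq_factorial_stirling, surj_eq_factorial_stirling] at h
  rw [show b + 2 + d = b + 1 + d + 1 from by omega] at h
  rw [Nat.factorial_succ (b + 1 + d), Nat.factorial_succ b] at h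
  have key : ((b + 1 + d).factorial * b.factorial) *
      ((b + 1 + d + 1) * stirling m b * stirling m (b + 1 + d + 1)) <
      ((b + 1 + d).factorial * b.factorial) *
      ((b + 1) * stirling m (b + 1 + d) * stirling m (b + 1)) := by
    nlinarith [h]
  exact Nat.lt_of_mul_lt_mul_left key

theorem stmt_13 (n k l t : ℕ) (ht : 1 ≤ t) (hlt : t + 2 ≤ l) (hkl : l < k)
    (hnk : k < n) :
    (stirling (n - t - 1) (k - t - 1) : ℤ) *
        ((t + 1) * stirling (n - t) (l - t) - t * stirling (n - t - 1) (l - t - 1)) >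
      (stirling (n - t - 1) (l - t - 1) : ℤ) *
        ((t + 1) * stirling (n - t) (k - t) - t * stirling (n - t - 1) (k - t - 1)) := by
  set m := n - t - 1 with hm
  set a := k - t - 1 with ha
  set b := l - t - 1 with hbdef
  have h1 : n - t = m + 1 := by omega
  have h2 : k - t = a + 1 := by omega
  have h3 : l - t = b + 1 := by omega
  rw [h1, h2, h3]
  have hb : 1 ≤ b := by omega
  have hab : b + 1 ≤ a := by omega
  have ham : a + 1 ≤ m := by omega
  have ra : stirling (m + 1) (a + 1) = stirling m a + (a + 1) * stirling m (a + 1) := rfl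
  have rb : stirling (m + 1) (b + 1) = stirling m b + (b + 1) * stirling m (b + 1) := rfl
  rw [ra, rb]
  have H := stirling_key m a b hb hab ham
  have H' : ((a : ℤ) + 1) * stirling m b * stirling m (a + 1) <
      ((b : ℤ) + 1) * stirling m a * stirling m (b + 1) := by exact_mod_cast H
  have key : ((t : ℤ) + 1) * (((a : ℤ) + 1) * stirling m b * stirling m (a + 1)) <
      ((t : ℤ) + 1) * (((b : ℤ) + 1) * stirling m a * stirling m (b + 1)) := by
    apply mul_lt_mul_of_pos_left H' (by positivity)
  push_cast
  nlinarith [key]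
end

section
/- Let G be a partition of [n] into t+2 blocks, where exactly t+1 of its blocks are singletons (n ≥ t+2). Let k ≥ t+2 and let W be the set of partitions F of [n] into k blocks such that |F ∩ G| ≥ t. Then |W| = (t+1)·S(n-t, k-t) - t·S(n-t-1, k-t-1). -/
/-- `P` is a partition of `[n]` into `k` pairwise disjoint nonempty blocks. -/
def IsKPartition (n k : ℕ) (P : Finset (Finset (Fin n))) : Prop :=
  P.card = k ∧ (∀ B ∈ P, B.Nonempty) ∧
    (∀ B ∈ P, ∀ C ∈ P, B ≠ C → Disjoint B C) ∧ P.sup id = Finset.univ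

/-!
Let `Sg` be the `t + 1` singleton blocks of `G` and `B₀` its remaining block. If a `k`-partition
`F` has `B₀` as a block, its other `k - 1 ≥ t + 1` blocks partition the `t + 1` points outside
`B₀`, so they are exactly the blocks of `Sg`; hence `t ≤ |F ∩ G|` iff `t ≤ |F ∩ Sg|`. The latter
means that `F` contains `Sg` with at most one block `b` removed, and inclusion–exclusion over `b`
gives `∑_b #{F ⊇ Sg \ {b}} - t · #{F ⊇ Sg}`. Fixing `m` singleton blocks leaves an arbitrary
`(k - m)`-partition of the other `n - m` points, and partitions are counted by the Stirling
recurrence: the first point either is a singleton block or joins one of the `k` blocks of a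
partition of the rest.
-/

open Finset

variable {α : Type*} [DecidableEq α]

structure IsPartitionOf (s : Finset α) (k : ℕ) (P : Finset (Finset α)) : Prop where
  card_eq : P.card = k
  nonempty : ∀ B ∈ P, B.Nonempty
  disjoint : ∀ B ∈ P, ∀ C ∈ P, B ≠ C → Disjoint B C
  sup_eq : P.sup id = s

theorem isKPartition_iff {n k : ℕ} {P : Finset (Finset (Fin n))} :
    IsKPartition n k P ↔ IsPartitionOf univ k P :=
  ⟨fun ⟨h₁, h₂, h₃, h₄⟩ => ⟨h₁, h₂, h₃, h₄⟩, fun ⟨h₁, h₂, h₃, h₄⟩ => ⟨h₁, h₂, h₃, h₄⟩⟩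

namespace IsPartitionOf

variable {s t B C : Finset α} {k l : ℕ} {P Q : Finset (Finset α)} {a : α}

theorem subset (hP : IsPartitionOf s k P) (hB : B ∈ P) : B ⊆ s :=
  hP.sup_eq ▸ le_sup (f := id) hB

theorem exists_mem (hP : IsPartitionOf s k P) {x : α} (hx : x ∈ s) : ∃ B ∈ P, x ∈ B := by
  rw [← hP.sup_eq] at hx
  simpa using mem_sup.mp hx

theorem eq_of_mem_of_mem (hP : IsPartitionOf s k P) (hB : B ∈ P) (hC : C ∈ P) {x : α}
    (hxB : x ∈ B) (hxC : x ∈ C) : B = C := by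
  by_contra hBC
  exact disjoint_left.mp (hP.disjoint B hB C hC hBC) hxB hxC

theorem eq_empty_iff (hP : IsPartitionOf s k P) : s = ∅ ↔ k = 0 := by
  rw [← hP.card_eq, card_eq_zero]
  constructor
  · rintro rfl
    exact eq_empty_of_forall_notMem fun B hB =>
      (hP.nonempty B hB).ne_empty (subset_empty.mp (hP.subset hB))
  · intro h
    rw [← hP.sup_eq, h, sup_empty, bot_eq_empty]

theorem sum_card (hP : IsPartitionOf s k P) : ∑ B ∈ P, B.card = s.card := by
  rw [← hP.sup_eq, sup_eq_biUnion, card_biUnion]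
  · rfl
  · exact fun B hB C hC hBC => hP.disjoint B hB C hC hBC

theorem card_eq_of_forall_card_eq_one (hP : IsPartitionOf s k P) (h : ∀ B ∈ P, B.card = 1) :
    s.card = k := by
  rw [← hP.sum_card, sum_congr rfl h, sum_const, smul_eq_mul, mul_one, hP.card_eq]

theorem singleton_mem_of_card_le (hP : IsPartitionOf s k P) (hk : s.card ≤ k) {x : α}
    (hx : x ∈ s) : {x} ∈ P := by
  obtain ⟨B, hB, hxB⟩ := hP.exists_mem hx
  suffices B.card = 1 by
    obtain ⟨y, rfl⟩ := card_eq_one.mp this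
    rwa [mem_singleton.mp hxB]
  by_contra hne
  have : ∑ _ ∈ P, 1 < ∑ C ∈ P, C.card :=
    sum_lt_sum (fun C hC => (hP.nonempty C hC).card_pos)
      ⟨B, hB, lt_of_le_of_ne (hP.nonempty B hB).card_pos (Ne.symm hne)⟩
  rw [hP.sum_card, sum_const, smul_eq_mul, mul_one, hP.card_eq] at this
  omega

theorem disjoint_of_disjoint (hP : IsPartitionOf s k P) (hQ : IsPartitionOf t l Q)
    (hst : Disjoint s t) : Disjoint P Q := by
  refine disjoint_left.mpr fun B hBP hBQ => ?_
  obtain ⟨x, hx⟩ := hP.nonempty B hBP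
  exact disjoint_left.mp hst (hP.subset hBP hx) (hQ.subset hBQ hx)

theorem union (hP : IsPartitionOf s k P) (hQ : IsPartitionOf t l Q) (hst : Disjoint s t) :
    IsPartitionOf (s ∪ t) (k + l) (P ∪ Q) where
  card_eq := by rw [card_union_of_disjoint (hP.disjoint_of_disjoint hQ hst), hP.card_eq, hQ.card_eq]
  nonempty B hB := (mem_union.mp hB).elim (hP.nonempty B) (hQ.nonempty B)
  disjoint B hB C hC hBC := by
    rcases mem_union.mp hB with hB | hB <;> rcases mem_union.mp hC with hC | hC
    · exact hP.disjoint B hB C hC hBC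
    · exact hst.mono (hP.subset hB) (hQ.subset hC)
    · exact hst.symm.mono (hQ.subset hB) (hP.subset hC)
    · exact hQ.disjoint B hB C hC hBC
  sup_eq := by rw [sup_union, hP.sup_eq, hQ.sup_eq, sup_eq_union]

theorem sdiff (hP : IsPartitionOf s k P) {𝓑 : Finset (Finset α)} (h𝓑 : 𝓑 ⊆ P) :
    IsPartitionOf (s \ 𝓑.sup id) (k - 𝓑.card) (P \ 𝓑) where
  card_eq := by rw [card_sdiff_of_subset h𝓑, hP.card_eq]
  nonempty B hB := hP.nonempty B (mem_sdiff.mp hB).1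
  disjoint B hB C hC := hP.disjoint B (mem_sdiff.mp hB).1 C (mem_sdiff.mp hC).1
  sup_eq := by
    ext x
    simp only [mem_sup, mem_sdiff, id, ← hP.sup_eq]
    constructor
    · rintro ⟨B, ⟨hBP, hB𝓑⟩, hxB⟩
      refine ⟨⟨B, hBP, hxB⟩, fun ⟨C, hC𝓑, hxC⟩ => hB𝓑 ?_⟩
      rwa [hP.eq_of_mem_of_mem hBP (h𝓑 hC𝓑) hxB hxC]
    · rintro ⟨⟨B, hBP, hxB⟩, hx⟩
      exact ⟨B, ⟨hBP, fun hB𝓑 => hx ⟨B, hB𝓑, hxB⟩⟩, hxB⟩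

theorem erase (hP : IsPartitionOf s k P) (hB : B ∈ P) :
    IsPartitionOf (s \ B) (k - 1) (P.erase B) := by
  simpa [sdiff_singleton_eq_erase] using hP.sdiff (singleton_subset_iff.mpr hB)

theorem singleton (hB : B.Nonempty) : IsPartitionOf B 1 {B} where
  card_eq := card_singleton B
  nonempty _ hC := mem_singleton.mp hC ▸ hB
  disjoint _ hC _ hD hCD := absurd ((mem_singleton.mp hC).trans (mem_singleton.mp hD).symm) hCD
  sup_eq := sup_singleton

theorem replace (hP : IsPartitionOf s k P) (hB : B ∈ P) (hC : C.Nonempty)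
    (hd : Disjoint C (s \ B)) : IsPartitionOf (C ∪ s \ B) k (insert C (P.erase B)) := by
  have hk : 1 + (k - 1) = k := by have := hP.card_eq ▸ card_pos.mpr ⟨B, hB⟩; omega
  simpa [hk, ← insert_eq] using (singleton hC).union (hP.erase hB) hd

theorem insert_point (hQ : IsPartitionOf s k Q) (ha : a ∉ s) (hC : C ∈ Q) :
    IsPartitionOf (insert a s) k (insert (insert a C) (Q.erase C)) := by
  have hd : Disjoint (insert a C) (s \ C) :=
    disjoint_insert_left.mpr ⟨fun h => ha (mem_sdiff.mp h).1, disjoint_sdiff⟩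
  simpa [insert_union, union_sdiff_of_subset (hQ.subset hC)] using
    hQ.replace hC (insert_nonempty a C) hd

theorem erase_point (hP : IsPartitionOf (insert a s) k P) (ha : a ∉ s) (hB : B ∈ P)
    (haB : a ∈ B) (hBa : B ≠ {a}) : IsPartitionOf s k (insert (B.erase a) (P.erase B)) := by
  have hne : (B.erase a).Nonempty := by
    by_contra h
    rw [not_nonempty_iff_eq_empty, erase_eq_empty_iff] at h
    exact h.elim (fun h => notMem_empty a (h ▸ haB)) hBa
  have hs : B.erase a ∪ (insert a s \ B) = s := by
    have := hP.subset hB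
    ext x
    simp only [mem_union, mem_erase, mem_sdiff, mem_insert]
    grind
  simpa [hs] using hP.replace hB hne (disjoint_sdiff.mono_left (erase_subset a B))

end IsPartitionOf

open Classical in
noncomputable def partitions (s : Finset α) (k : ℕ) : Finset (Finset (Finset α)) :=
  s.powerset.powerset.filter (IsPartitionOf s k)

theorem mem_partitions {s : Finset α} {k : ℕ} {P : Finset (Finset α)} :
    P ∈ partitions s k ↔ IsPartitionOf s k P := by
  classical
  rw [partitions, mem_filter, mem_powerset, and_iff_right_iff_imp]
  exact fun hP B hB => mem_powerset.mpr (hP.subset hB)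

theorem card_filter_superset_partitions {s U : Finset α} {k m : ℕ} {𝓑 : Finset (Finset α)}
    (h𝓑 : IsPartitionOf U m 𝓑) (hU : U ⊆ s) (hm : m ≤ k) :
    ((partitions s k).filter (𝓑 ⊆ ·)).card = (partitions (s \ U) (k - m)).card := by
  refine card_nbij' (· \ 𝓑) (· ∪ 𝓑) ?_ ?_ ?_ ?_
  · intro P hP
    obtain ⟨hP, h𝓑P⟩ := mem_filter.mp hP
    have := (mem_partitions.mp hP).sdiff h𝓑P
    rwa [h𝓑.sup_eq, h𝓑.card_eq, ← mem_partitions] at this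
  · intro Q hQ
    have := (mem_partitions.mp hQ).union h𝓑 sdiff_disjoint
    rw [sdiff_union_of_subset hU, Nat.sub_add_cancel hm, ← mem_partitions] at this
    exact mem_filter.mpr ⟨this, subset_union_right⟩
  · intro P hP
    exact sdiff_union_of_subset (mem_filter.mp hP).2
  · intro Q hQ
    exact union_sdiff_cancel_right ((mem_partitions.mp hQ).disjoint_of_disjoint h𝓑 sdiff_disjoint)

theorem partitions_zero_of_nonempty {s : Finset α} (hs : s.Nonempty) :
    partitions s 0 = ∅ :=
  eq_empty_of_forall_notMem fun _ hP =>
    hs.ne_empty ((mem_partitions.mp hP).eq_empty_iff.mpr rfl)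

theorem card_filter_singleton_notMem_partitions {s : Finset α} {a : α} (ha : a ∉ s) (k : ℕ) :
    ((partitions (insert a s) k).filter ({a} ∉ ·)).card = k * (partitions s k).card := by
  have hsigma : k * (partitions s k).card = ((partitions s k).sigma id).card := by
    simp only [card_sigma, id]
    rw [sum_const_nat fun Q hQ => (mem_partitions.mp hQ).card_eq, mul_comm]
  have ha_notMem {Q : Finset (Finset α)} {C : Finset α} (hQ : Q ∈ partitions s k) (hC : C ∈ Q) :
      a ∉ C := fun h => ha ((mem_partitions.mp hQ).subset hC h)
  have hins {Q : Finset (Finset α)} {C : Finset α} (hQ : Q ∈ partitions s k) (hC : C ∈ Q) :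
      insert a C ∉ Q.erase C := fun h => ha_notMem hQ (mem_of_mem_erase h) (mem_insert_self a C)
  rw [hsigma]
  symm
  refine card_nbij (fun x => insert (insert a x.2) (x.1.erase x.2)) ?_ ?_ ?_
  · rintro ⟨Q, C⟩ hx
    obtain ⟨hQ, hC⟩ : Q ∈ partitions s k ∧ C ∈ Q := mem_sigma.mp hx
    refine mem_filter.mpr ⟨mem_partitions.mpr ((mem_partitions.mp hQ).insert_point ha hC), ?_⟩
    intro h
    rcases mem_insert.mp h with h | h
    · obtain ⟨c, hc⟩ := (mem_partitions.mp hQ).nonempty C hC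
      have : c = a := mem_singleton.mp (h ▸ mem_insert_of_mem hc)
      exact ha_notMem hQ hC (this ▸ hc)
    · exact ha_notMem hQ (mem_of_mem_erase h) (mem_singleton_self a)
  · rintro ⟨Q, C⟩ hx ⟨Q', C'⟩ hx' heq
    obtain ⟨hQ, hC⟩ : Q ∈ partitions s k ∧ C ∈ Q := mem_sigma.mp hx
    obtain ⟨hQ', hC'⟩ : Q' ∈ partitions s k ∧ C' ∈ Q' := mem_sigma.mp hx'
    simp only at heq
    have hP := (mem_partitions.mp hQ).insert_point ha hC
    have hCC' : insert a C = insert a C' :=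
      hP.eq_of_mem_of_mem (mem_insert_self _ _) (heq ▸ mem_insert_self _ _)
        (mem_insert_self a C) (mem_insert_self a C')
    have hCeq : C = C' := by
      rw [← erase_insert (ha_notMem hQ hC), hCC', erase_insert (ha_notMem hQ' hC')]
    subst hCeq
    have hQeq : Q.erase C = Q'.erase C := by
      rw [← erase_insert (hins hQ hC), heq, erase_insert (hins hQ' hC')]
    obtain rfl : Q = Q' := by rw [← insert_erase hC, hQeq, insert_erase hC']
    rfl
  · intro P hP
    obtain ⟨hP, haP⟩ := mem_filter.mp hP
    have hP := mem_partitions.mp hP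
    obtain ⟨B, hB, haB⟩ := hP.exists_mem (mem_insert_self a s)
    have hBa : B ≠ {a} := fun h => haP (h ▸ hB)
    have hQ := hP.erase_point ha hB haB hBa
    have hfresh : B.erase a ∉ P.erase B := by
      intro h
      obtain ⟨y, hy⟩ := hQ.nonempty _ (mem_insert_self _ _)
      exact (mem_erase.mp h).1
        (hP.eq_of_mem_of_mem (mem_of_mem_erase h) hB hy (mem_of_mem_erase hy))
    refine ⟨⟨_, B.erase a⟩, mem_sigma.mpr ⟨mem_partitions.mpr hQ, mem_insert_self _ _⟩, ?_⟩
    simp only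
    rw [insert_erase haB, erase_insert hfresh, insert_erase hB]

theorem card_partitions (s : Finset α) (k : ℕ) : (partitions s k).card = stirling s.card k := by
  induction s using Finset.induction_on generalizing k with
  | empty =>
    rcases k with _ | k
    · have : partitions (∅ : Finset α) 0 = {∅} := by
        ext P
        rw [mem_partitions, mem_singleton]
        refine ⟨fun hP => card_eq_zero.mp hP.card_eq, ?_⟩
        rintro rfl
        exact ⟨rfl, by simp, by simp, rfl⟩
      rw [this]
      rfl
    · rw [eq_empty_of_forall_notMem fun P hP =>
        k.succ_ne_zero ((mem_partitions.mp hP).eq_empty_iff.mp rfl)]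
      rfl
  | insert a s ha ih =>
    rcases k with _ | k
    · rw [partitions_zero_of_nonempty (insert_nonempty a s), card_insert_of_notMem ha]
      rfl
    · have hmem : ((partitions (insert a s) (k + 1)).filter ({a} ∈ ·)).card =
          (partitions s k).card := by
        simpa [singleton_subset_iff, sdiff_singleton_eq_erase, erase_insert ha] using
          card_filter_superset_partitions (IsPartitionOf.singleton (singleton_nonempty a))
            (singleton_subset_iff.mpr (mem_insert_self a s)) (Nat.le_add_left 1 k)
      rw [← card_filter_add_card_filter_not (fun P => {a} ∈ P), hmem,
        card_filter_singleton_notMem_partitions ha, ih, ih, card_insert_of_notMem ha]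
      rfl

theorem card_filter_superset_partitions_of_card_eq_one {s : Finset α} {k : ℕ}
    {𝓑 : Finset (Finset α)} (h𝓑 : ∀ B ∈ 𝓑, B.card = 1) (hs : 𝓑.sup id ⊆ s) (hk : 𝓑.card ≤ k) :
    ((partitions s k).filter (𝓑 ⊆ ·)).card = stirling (s.card - 𝓑.card) (k - 𝓑.card) := by
  have hpart : IsPartitionOf (𝓑.sup id) 𝓑.card 𝓑 :=
    { card_eq := rfl
      nonempty := fun B hB => card_pos.mp (by rw [h𝓑 B hB]; exact one_pos)
      disjoint := fun B hB C hC hBC => by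
        obtain ⟨x, rfl⟩ := card_eq_one.mp (h𝓑 B hB)
        obtain ⟨y, rfl⟩ := card_eq_one.mp (h𝓑 C hC)
        exact disjoint_singleton.mpr fun hxy => hBC (hxy ▸ rfl)
      sup_eq := rfl }
  rw [card_filter_superset_partitions hpart hs hk, card_partitions, card_sdiff_of_subset hs,
    hpart.card_eq_of_forall_card_eq_one h𝓑]

section InclusionExclusion

variable {β : Type*} [DecidableEq β] {S : Finset β} {t : ℕ}

theorem ite_le_card_inter_eq (hS : S.card = t + 1) (F : Finset β) :
    (if t ≤ (F ∩ S).card then 1 else 0 : ℤ) =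
      ∑ b ∈ S, (if S.erase b ⊆ F then 1 else 0) - t * (if S ⊆ F then 1 else 0) := by
  by_cases hSF : S ⊆ F
  · have hS_erase : ∀ b ∈ S, S.erase b ⊆ F := fun b _ => (erase_subset b S).trans hSF
    rw [inter_eq_right.mpr hSF, hS, if_pos (Nat.le_succ t), if_pos hSF,
      sum_congr rfl fun b hb => if_pos (hS_erase b hb), sum_const, hS]
    simp
  · obtain ⟨c, hcS, hcF⟩ := not_subset.mp hSF
    have hsum : ∑ b ∈ S, (if S.erase b ⊆ F then 1 else 0 : ℤ) =
        if S.erase c ⊆ F then 1 else 0 :=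
      sum_eq_single_of_mem c hcS fun b _ hbc =>
        if_neg fun h => hcF (h (mem_erase.mpr ⟨Ne.symm hbc, hcS⟩))
    have hsub : F ∩ S ⊆ S.erase c := fun x hx =>
      mem_erase.mpr ⟨fun h => hcF (h ▸ (mem_inter.mp hx).1), (mem_inter.mp hx).2⟩
    have hcard : (S.erase c).card = t := by rw [card_erase_of_mem hcS, hS, Nat.add_sub_cancel]
    have hiff : S.erase c ⊆ F ↔ t ≤ (F ∩ S).card := by
      refine ⟨fun h => hcard ▸ card_le_card fun x hx => ?_, fun h => ?_⟩
      · exact mem_inter.mpr ⟨h hx, mem_of_mem_erase hx⟩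
      · rw [← eq_of_subset_of_card_le hsub (hcard ▸ h)]
        exact inter_subset_left
    simp only [hsum, hSF, hiff, if_false, mul_zero, sub_zero]

theorem card_filter_le_card_inter (hS : S.card = t + 1) (𝓕 : Finset (Finset β)) :
    ((𝓕.filter fun F => t ≤ (F ∩ S).card).card : ℤ) =
      ∑ b ∈ S, ((𝓕.filter (S.erase b ⊆ ·)).card : ℤ) - t * (𝓕.filter (S ⊆ ·)).card := by
  simp only [card_filter, Nat.cast_sum, Nat.cast_ite, Nat.cast_one, Nat.cast_zero]
  rw [sum_comm, mul_sum, ← sum_sub_distrib]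
  exact sum_congr rfl fun F _ => ite_le_card_inter_eq hS F

end InclusionExclusion

theorem le_card_inter_insert_iff {s B₀ : Finset α} {Sg F : Finset (Finset α)} {k t : ℕ}
    (hSg : IsPartitionOf (s \ B₀) (t + 1) Sg) (hsing : ∀ B ∈ Sg, B.card = 1)
    (hF : IsPartitionOf s k F) (hk : t + 2 ≤ k) :
    t ≤ (F ∩ insert B₀ Sg).card ↔ t ≤ (F ∩ Sg).card := by
  refine ⟨fun h => ?_, fun h =>
    h.trans (card_le_card (inter_subset_inter_left (subset_insert B₀ Sg)))⟩
  by_cases hB₀ : B₀ ∈ F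
  · have hSgF : Sg ⊆ F := by
      intro B hB
      obtain ⟨x, rfl⟩ := card_eq_one.mp (hsing B hB)
      have hcard : (s \ B₀).card ≤ k - 1 := by
        rw [hSg.card_eq_of_forall_card_eq_one hsing]
        omega
      exact mem_of_mem_erase ((hF.erase hB₀).singleton_mem_of_card_le hcard
        (hSg.subset hB (mem_singleton_self x)))
    rw [inter_eq_right.mpr hSgF, hSg.card_eq]
    omega
  · rwa [inter_insert_of_notMem hB₀] at h

theorem stmt_16_general (n k t : ℕ) (hkt : t + 2 ≤ k)
    (G : Finset (Finset (Fin n))) (hG : IsKPartition n (t + 2) G)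
    (hGsing : (G.filter fun B => B.card = 1).card = t + 1) :
    ({F : Finset (Finset (Fin n)) | IsKPartition n k F ∧ t ≤ (F ∩ G).card}.ncard : ℤ) =
      (t + 1) * stirling (n - t) (k - t) - t * stirling (n - t - 1) (k - t - 1) := by
  set Sg := G.filter fun B => B.card = 1
  have hsing : ∀ B ∈ Sg, B.card = 1 := fun B hB => (mem_filter.mp hB).2
  obtain ⟨B₀, hB₀, hGeq⟩ : ∃ B₀ ∉ Sg, insert B₀ Sg = G :=
    exists_eq_insert_iff.mpr ⟨filter_subset _ _, by rw [hGsing, hG.1]⟩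
  have hSg : IsPartitionOf (univ \ B₀) (t + 1) Sg := by
    have := (isKPartition_iff.mp hG).erase (hGeq ▸ mem_insert_self B₀ Sg)
    rwa [← hGeq, erase_insert hB₀] at this
  have hW : {F | IsKPartition n k F ∧ t ≤ (F ∩ G).card} =
      ↑((partitions univ k).filter fun F => t ≤ (F ∩ Sg).card) := by
    ext F
    simp only [Set.mem_ofPred_eq, mem_coe, mem_filter, mem_partitions, isKPartition_iff, ← hGeq]
    exact and_congr_right fun hF => le_card_inter_insert_iff hSg hsing hF hkt
  have hcount {𝓑} (h𝓑 : 𝓑 ⊆ Sg) {m : ℕ} (hm : 𝓑.card = m) (hk : m ≤ k) :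
      ((partitions univ k).filter (𝓑 ⊆ ·)).card = stirling (n - m) (k - m) := by
    rw [card_filter_superset_partitions_of_card_eq_one (fun B hB => hsing B (h𝓑 hB))
      (subset_univ _) (hm ▸ hk), hm, card_univ, Fintype.card_fin]
  rw [hW, Set.ncard_coe_finset, card_filter_le_card_inter hGsing,
    sum_congr rfl fun b hb => congrArg Nat.cast (hcount (erase_subset b Sg)
      (by rw [card_erase_of_mem hb, hGsing, Nat.add_sub_cancel]) (by omega)),
    hcount subset_rfl hGsing (by omega), sum_const, hGsing, Nat.sub_sub, Nat.sub_sub]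
  ring

theorem stmt_16 (n k t : ℕ) (hn : t + 2 ≤ n) (hkt : t + 2 ≤ k)
    (G : Finset (Finset (Fin n))) (hG : IsKPartition n (t + 2) G)
    (hGsing : (G.filter fun B => B.card = 1).card = t + 1) :
    ({F : Finset (Finset (Fin n)) | IsKPartition n k F ∧ t ≤ (F ∩ G).card}.ncard : ℤ) =
      (t + 1) * stirling (n - t) (k - t) - t * stirling (n - t - 1) (k - t - 1) :=
  stmt_16_general n k t hkt G hG hGsing
end
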